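/- arXiv:2008.10403 — 2 statements merged into one kernel-verified Lean document; each statement's English description precedes it below -/
import Mathlib

section
/- Let n ≥ 1, let ∼ be a symmetric relation on {1,…,n}, let Φ be the associated disconnection indicator on nonempty subsets of {1,…,n}, and let φ be the cumulant family of Φ. Then φ({1,…,n}) = ∑_G ∏_{{i,j} ∈ E(G)} (−1_{i∼j}), where the sum ranges over all connected graphs G on the vertex set {1,…,n}; equivalently, φ({1,…,n}) = ∑_G (−1)^{|E(G)|}, the sum ranging over all connected graphs G on {1,…,n} all of whose edges {i,j} satisfy i ∼ j. -/
/-!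
Expanding `Φ(B) = ∏ (1 - 1)` over the related pairs of `B` gives
`Φ(B) = ∑_{G ≤ ∼ on B} (-1)^{|E(G)|}`, so `∏_{B ∈ π} Φ(B)` is the signed sum over the graphs
`G ≤ ∼` whose edges stay inside the blocks of `π`. Exchanging the sums, the coefficient of `G` is
`∑ μ(π, 1̂)` over the partitions `π` coarser than the connected components of `G`. These are the
partitions of the set of components, and `∑_π (-1)^{|π|-1} (|π|-1)! = [|T| ≤ 1]` over the
partitions of a finite set `T`, so only the connected graphs survive.
-/

open Finset

open scoped Classical

/-- The set partitions of a finite set `S` into nonempty blocks, encoded as finsets of blocks. -/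
noncomputable def setPartitions {α : Type*} [DecidableEq α] (S : Finset α) :
    Finset (Finset (Finset α)) :=
  S.powerset.powerset.filter fun P =>
    (∀ B ∈ P, B.Nonempty) ∧ (∀ B ∈ P, ∀ B' ∈ P, B ≠ B' → Disjoint B B') ∧ P.sup id = S

/-- The cumulant family associated to a function on subsets. -/
noncomputable def cumulantFamily {α : Type*} [DecidableEq α] (a : Finset α → ℝ)
    (S : Finset α) : ℝ :=
  ∑ P ∈ setPartitions S,
    (-1 : ℝ) ^ (P.card - 1) * (Nat.factorial (P.card - 1)) * ∏ B ∈ P, a B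

/-- The disconnection indicator of a relation `r`: `Φ(S) = 1` iff no two distinct elements of
`S` are related by `r`. -/
noncomputable def disconnectionIndicator {n : ℕ} (r : Fin n → Fin n → Prop)
    (S : Finset (Fin n)) : ℝ :=
  if ∀ i ∈ S, ∀ j ∈ S, i ≠ j → ¬r i j then 1 else 0

section SetPartitions

variable {α : Type*} [DecidableEq α] {S B B' : Finset α} {P : Finset (Finset α)}

theorem mem_setPartitions :
    P ∈ setPartitions S ↔
      (∀ B ∈ P, B.Nonempty) ∧ (∀ B ∈ P, ∀ B' ∈ P, B ≠ B' → Disjoint B B') ∧ P.sup id = S := by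
  refine mem_filter.trans (and_iff_right_of_imp fun ⟨_, _, hsup⟩ => ?_)
  exact mem_powerset.2 fun B hB => mem_powerset.2 (hsup ▸ le_sup (f := id) hB)

theorem subset_of_mem_setPartitions (hP : P ∈ setPartitions S) (hB : B ∈ P) : B ⊆ S :=
  (mem_setPartitions.1 hP).2.2 ▸ le_sup (f := id) hB

theorem exists_mem_of_mem_setPartitions (hP : P ∈ setPartitions S) {x : α} (hx : x ∈ S) :
    ∃ B ∈ P, x ∈ B := by
  rw [← (mem_setPartitions.1 hP).2.2] at hx
  simpa using mem_sup.1 hx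

theorem eq_of_mem_of_mem_setPartitions (hP : P ∈ setPartitions S) (hB : B ∈ P) (hB' : B' ∈ P)
    {x : α} (hx : x ∈ B) (hx' : x ∈ B') : B = B' := by
  by_contra h
  exact disjoint_left.1 ((mem_setPartitions.1 hP).2.1 B hB B' hB' h) hx hx'

theorem notMem_of_mem_setPartitions_sdiff (hB : B.Nonempty) (hP : P ∈ setPartitions (S \ B)) :
    B ∉ P := fun hBP => by
  obtain ⟨x, hx⟩ := hB
  exact (mem_sdiff.1 (subset_of_mem_setPartitions hP hBP hx)).2 hx

theorem insert_mem_setPartitions (hB : B.Nonempty) (hBS : B ⊆ S)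
    (hP : P ∈ setPartitions (S \ B)) : insert B P ∈ setPartitions S := by
  obtain ⟨hne, hdisj, hsup⟩ := mem_setPartitions.1 hP
  have hBdisj : ∀ C ∈ P, Disjoint B C := fun C hC =>
    disjoint_of_subset_right (subset_of_mem_setPartitions hP hC) disjoint_sdiff
  refine mem_setPartitions.2 ⟨?_, ?_, ?_⟩
  · simpa [hB] using hne
  · simp only [mem_insert]
    rintro C (rfl | hC) C' (rfl | hC') hCC'
    exacts [absurd rfl hCC', hBdisj C' hC', (hBdisj C hC).symm, hdisj C hC C' hC' hCC']
  · rw [sup_insert, hsup, id, sup_eq_union, union_sdiff_of_subset hBS]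

theorem erase_mem_setPartitions (hP : P ∈ setPartitions S) (hB : B ∈ P) :
    P.erase B ∈ setPartitions (S \ B) := by
  obtain ⟨hne, hdisj, hsup⟩ := mem_setPartitions.1 hP
  refine mem_setPartitions.2 ⟨fun C hC => hne C (mem_of_mem_erase hC),
    fun C hC C' hC' => hdisj C (mem_of_mem_erase hC) C' (mem_of_mem_erase hC'), ?_⟩
  ext x
  simp only [mem_sup, mem_erase, id, mem_sdiff]
  constructor
  · rintro ⟨C, ⟨hCB, hC⟩, hx⟩
    exact ⟨subset_of_mem_setPartitions hP hC hx,
      fun hxB => hCB (eq_of_mem_of_mem_setPartitions hP hC hB hx hxB)⟩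
  · rintro ⟨hxS, hxB⟩
    obtain ⟨C, hC, hx⟩ := exists_mem_of_mem_setPartitions hP hxS
    exact ⟨C, ⟨fun h => hxB (h ▸ hx), hC⟩, hx⟩

theorem setPartitions_empty : setPartitions (∅ : Finset α) = {∅} := by
  ext P
  refine ⟨fun hP => mem_singleton.2 (eq_empty_of_forall_notMem fun B hB => ?_), ?_⟩
  · obtain ⟨x, hx⟩ := (mem_setPartitions.1 hP).1 B hB
    exact notMem_empty x (subset_of_mem_setPartitions hP hB hx)
  · intro h
    simp [mem_singleton.1 h, mem_setPartitions]

theorem setPartitions_singleton (a : α) : setPartitions ({a} : Finset α) = {{{a}}} := by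
  ext P
  refine ⟨fun hP => ?_, ?_⟩
  · have hblock : ∀ B ∈ P, B = {a} := fun B hB =>
      (subset_singleton_iff.1 (subset_of_mem_setPartitions hP hB)).resolve_left
        ((mem_setPartitions.1 hP).1 B hB).ne_empty
    obtain ⟨B, hB, -⟩ := exists_mem_of_mem_setPartitions hP (mem_singleton_self a)
    exact mem_singleton.2 (eq_singleton_iff_unique_mem.2 ⟨hblock B hB ▸ hB, hblock⟩)
  · intro h
    simp [mem_singleton.1 h, mem_setPartitions]

theorem sum_setPartitions_sum_erase {M : Type*} [AddCommMonoid M] (S : Finset α)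
    (f : Finset α → Finset (Finset α) → M) :
    ∑ P ∈ setPartitions S, ∑ B ∈ P, f B (P.erase B) =
      ∑ B ∈ S.powerset with B.Nonempty, ∑ P ∈ setPartitions (S \ B), f B P := by
  rw [sum_sigma', sum_sigma']
  refine sum_nbij' (fun x => ⟨x.2, x.1.erase x.2⟩) (fun x => ⟨insert x.1 x.2, x.1⟩)
    ?_ ?_ ?_ ?_ (fun _ _ => rfl)
  · rintro ⟨P, B⟩ h
    simp only [mem_sigma, mem_filter, mem_powerset] at h ⊢
    exact ⟨⟨subset_of_mem_setPartitions h.1 h.2, (mem_setPartitions.1 h.1).1 B h.2⟩,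
      erase_mem_setPartitions h.1 h.2⟩
  · rintro ⟨B, P⟩ h
    simp only [mem_sigma, mem_filter, mem_powerset] at h ⊢
    exact ⟨insert_mem_setPartitions h.1.2 h.1.1 h.2, mem_insert_self B P⟩
  · rintro ⟨P, B⟩ h
    simp only [mem_sigma] at h
    simp [insert_erase h.2]
  · rintro ⟨B, P⟩ h
    simp only [mem_sigma, mem_filter, mem_powerset] at h
    simp [erase_insert (notMem_of_mem_setPartitions_sdiff h.1.2 h.2)]

end SetPartitions

section Moebius

variable {α : Type*} [DecidableEq α]

theorem neg_one_pow_card_sdiff {R : Type*} [Monoid R] [HasDistribNeg R] {S B : Finset α}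
    (h : B ⊆ S) : (-1 : R) ^ (S \ B).card = (-1) ^ S.card * (-1) ^ B.card := by
  rw [← card_sdiff_add_card_eq_card h, pow_add, mul_assoc, ← pow_add, ← two_mul, pow_mul,
    neg_one_sq, one_pow, mul_one]

theorem sum_powerset_filter_nonempty_neg_one_pow_card {S : Finset α} (hS : S.Nonempty) :
    ∑ B ∈ S.powerset with B.Nonempty, (-1 : ℝ) ^ B.card = -1 := by
  have hall : ∑ B ∈ S.powerset, (-1 : ℝ) ^ B.card = 0 := by
    exact_mod_cast sum_powerset_neg_one_pow_card_of_nonempty hS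
  rw [← sum_filter_add_sum_filter_not S.powerset Finset.Nonempty] at hall
  simp only [not_nonempty_iff_eq_empty, filter_eq', empty_mem_powerset, if_true, sum_singleton,
    card_empty, pow_zero] at hall
  linarith

theorem sum_powerset_filter_mem_neg_one_pow_card_sdiff {S : Finset α} {x : α} (hx : x ∈ S)
    (hS : (S.erase x).Nonempty) : ∑ B ∈ S.powerset with x ∈ B, (-1 : ℝ) ^ (S \ B).card = 0 :=
  calc ∑ B ∈ S.powerset with x ∈ B, (-1 : ℝ) ^ (S \ B).card
      = ∑ C ∈ (S.erase x).powerset, (-1 : ℝ) ^ C.card := by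
        refine sum_nbij' (S \ ·) (S \ ·) ?_ ?_ ?_ ?_ fun _ _ => rfl
        · simp only [mem_filter, mem_powerset]
          intro B ⟨_, hxB⟩
          exact fun y hy => mem_erase.2 ⟨fun h => (mem_sdiff.1 hy).2 (h ▸ hxB), (mem_sdiff.1 hy).1⟩
        · simp only [mem_filter, mem_powerset]
          intro C hC
          exact ⟨sdiff_subset, mem_sdiff.2 ⟨hx, fun h => (mem_erase.1 (hC h)).1 rfl⟩⟩
        · simp only [mem_filter, mem_powerset]
          exact fun B ⟨hBS, _⟩ => Finset.sdiff_sdiff_eq_self hBS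
        · simp only [mem_powerset]
          exact fun C hC => Finset.sdiff_sdiff_eq_self (hC.trans (erase_subset x S))
    _ = 0 := by exact_mod_cast sum_powerset_neg_one_pow_card_of_nonempty hS

theorem sum_setPartitions_neg_one_pow_mul_factorial (S : Finset α) :
    ∑ P ∈ setPartitions S, (-1 : ℝ) ^ P.card * P.card.factorial = (-1) ^ S.card := by
  induction S using Finset.strongInduction with
  | H S ih =>
  rcases S.eq_empty_or_nonempty with rfl | hS
  · simp [setPartitions_empty]
  -- `|P|! = |P| * (|P| - 1)!` spreads each term over the blocks of `P`.
  have hspread : ∀ P ∈ setPartitions S, (-1 : ℝ) ^ P.card * P.card.factorial =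
      ∑ B ∈ P, -((-1 : ℝ) ^ (P.erase B).card * ((P.erase B).card.factorial : ℝ)) := by
    intro P hP
    obtain ⟨B, hB, -⟩ := exists_mem_of_mem_setPartitions hP hS.choose_spec
    obtain ⟨k, hk⟩ := Nat.exists_eq_add_one.2 (card_pos.2 ⟨B, hB⟩)
    rw [sum_congr rfl fun B hB => by rw [card_erase_of_mem hB], sum_const, nsmul_eq_mul, hk,
      Nat.factorial_succ]
    push_cast
    ring
  calc ∑ P ∈ setPartitions S, (-1 : ℝ) ^ P.card * P.card.factorial
      = ∑ B ∈ S.powerset with B.Nonempty,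
          ∑ P ∈ setPartitions (S \ B), -((-1 : ℝ) ^ P.card * P.card.factorial) := by
        exact (sum_congr rfl hspread).trans (sum_setPartitions_sum_erase S
          fun _ P => -((-1 : ℝ) ^ P.card * (P.card.factorial : ℝ)))
    _ = ∑ B ∈ S.powerset with B.Nonempty, -((-1 : ℝ) ^ S.card * (-1) ^ B.card) := by
        refine sum_congr rfl fun B hB => ?_
        rw [mem_filter, mem_powerset] at hB
        rw [sum_neg_distrib, ih _ (sdiff_ssubset hB.1 hB.2), neg_one_pow_card_sdiff hB.1]
    _ = (-1) ^ S.card := by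
        rw [sum_neg_distrib, ← mul_sum, sum_powerset_filter_nonempty_neg_one_pow_card hS]
        ring

/-- The value `μ(π, 1̂)` of the Möbius function of the lattice of set partitions at a partition
`π` with `k` blocks. -/
noncomputable def partitionMoebius (k : ℕ) : ℝ :=
  (-1) ^ (k - 1) * (k - 1).factorial

theorem sum_setPartitions_partitionMoebius (S : Finset α) :
    ∑ P ∈ setPartitions S, partitionMoebius P.card = if S.card ≤ 1 then 1 else 0 := by
  obtain hS | ⟨a, rfl⟩ | hS : S.card = 0 ∨ (∃ a, S = {a}) ∨ 1 < S.card := by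
    rcases Nat.lt_trichotomy S.card 1 with h | h | h
    exacts [Or.inl (by omega), Or.inr (Or.inl (card_eq_one.1 h)), Or.inr (Or.inr h)]
  · simp [card_eq_zero.1 hS, setPartitions_empty, partitionMoebius]
  · simp [setPartitions_singleton, partitionMoebius]
  obtain ⟨x, hx⟩ : S.Nonempty := card_pos.1 (by omega)
  have hblock : ∀ P ∈ setPartitions S, partitionMoebius P.card =
      ∑ B ∈ P, if x ∈ B then (-1 : ℝ) ^ (P.erase B).card * (P.erase B).card.factorial else 0 := by
    intro P hP
    obtain ⟨B, hB, hxB⟩ := exists_mem_of_mem_setPartitions hP hx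
    rw [sum_eq_single_of_mem B hB fun C hC hCB =>
      if_neg fun hxC => hCB (eq_of_mem_of_mem_setPartitions hP hC hB hxC hxB),
      if_pos hxB, card_erase_of_mem hB, partitionMoebius]
  rw [if_neg (by omega)]
  calc ∑ P ∈ setPartitions S, partitionMoebius P.card
      = ∑ B ∈ S.powerset with B.Nonempty, ∑ P ∈ setPartitions (S \ B),
          if x ∈ B then (-1 : ℝ) ^ P.card * P.card.factorial else 0 := by
        exact (sum_congr rfl hblock).trans (sum_setPartitions_sum_erase S
          fun B P => if x ∈ B then (-1 : ℝ) ^ P.card * (P.card.factorial : ℝ) else 0)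
    _ = ∑ B ∈ S.powerset with x ∈ B, (-1 : ℝ) ^ (S \ B).card := by
        rw [sum_filter, sum_filter]
        refine sum_congr rfl fun B _ => ?_
        by_cases hxB : x ∈ B
        · have hB : B.Nonempty := ⟨x, hxB⟩
          simp [hxB, hB, sum_setPartitions_neg_one_pow_mul_factorial]
        · simp [hxB]
    _ = 0 := sum_powerset_filter_mem_neg_one_pow_card_sdiff hx
        (card_pos.1 (by rw [card_erase_of_mem hx]; omega))

end Moebius

section Coarsening

variable {α β : Type*} [Fintype α] [DecidableEq β] {q : α → β}

theorem filter_mem_image_eq_of_saturated {B : Finset α}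
    (hB : ∀ x y, q x = q y → x ∈ B → y ∈ B) : univ.filter (q · ∈ B.image q) = B := by
  ext a
  simp only [mem_filter, mem_univ, true_and, mem_image]
  exact ⟨fun ⟨y, hy, hqy⟩ => hB y a hqy hy, fun ha => ⟨a, ha, rfl⟩⟩

theorem image_filter_mem_eq (hq : Function.Surjective q) (D : Finset β) :
    (univ.filter (q · ∈ D)).image q = D := by
  ext b
  obtain ⟨a, rfl⟩ := hq b
  simp only [mem_image, mem_filter, mem_univ, true_and]
  exact ⟨fun ⟨_, ha, hqa⟩ => hqa ▸ ha, fun ha => ⟨a, ha, rfl⟩⟩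

variable [DecidableEq α] [Fintype β]

theorem image_image_mem_setPartitions (hq : Function.Surjective q) {P : Finset (Finset α)}
    (hP : P ∈ setPartitions univ) (hsat : ∀ B ∈ P, ∀ x y, q x = q y → x ∈ B → y ∈ B) :
    P.image (image q) ∈ setPartitions univ := by
  obtain ⟨hne, hdisj, -⟩ := mem_setPartitions.1 hP
  refine mem_setPartitions.2 ⟨?_, ?_, ?_⟩
  · simp only [mem_image]
    rintro _ ⟨B, hB, rfl⟩
    exact (hne B hB).image q
  · simp only [mem_image]
    rintro _ ⟨B, hB, rfl⟩ _ ⟨B', hB', rfl⟩ hBB'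
    refine disjoint_left.2 ?_
    simp only [mem_image]
    rintro _ ⟨x, hx, rfl⟩ ⟨y, hy, hyx⟩
    exact disjoint_left.1 (hdisj B hB B' hB' fun h => hBB' (h ▸ rfl)) hx (hsat B' hB' y x hyx hy)
  · refine eq_univ_of_forall fun b => ?_
    obtain ⟨a, rfl⟩ := hq b
    obtain ⟨B, hB, haB⟩ := exists_mem_of_mem_setPartitions hP (mem_univ a)
    exact mem_sup.2 ⟨B.image q, mem_image_of_mem _ hB, mem_image_of_mem q haB⟩

theorem image_filter_mem_setPartitions (hq : Function.Surjective q) {Q : Finset (Finset β)}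
    (hQ : Q ∈ setPartitions univ) :
    Q.image (fun D => univ.filter (q · ∈ D)) ∈ setPartitions univ := by
  obtain ⟨hne, hdisj, -⟩ := mem_setPartitions.1 hQ
  refine mem_setPartitions.2 ⟨?_, ?_, ?_⟩
  · simp only [mem_image]
    rintro _ ⟨D, hD, rfl⟩
    obtain ⟨d, hd⟩ := hne D hD
    obtain ⟨a, rfl⟩ := hq d
    exact ⟨a, by simpa using hd⟩
  · simp only [mem_image]
    rintro _ ⟨D, hD, rfl⟩ _ ⟨D', hD', rfl⟩ hDD'
    exact disjoint_filter.2 fun _ _ ha =>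
      disjoint_left.1 (hdisj D hD D' hD' fun h => hDD' (h ▸ rfl)) ha
  · refine eq_univ_of_forall fun a => ?_
    obtain ⟨D, hD, haD⟩ := exists_mem_of_mem_setPartitions hQ (mem_univ (q a))
    exact mem_sup.2 ⟨_, mem_image_of_mem _ hD, by simpa using haD⟩

/-- Partitions of `α` whose blocks are unions of fibres of `q` correspond, via `image q`, to
partitions of `β`. -/
theorem sum_setPartitions_saturated {M : Type*} [AddCommMonoid M] (hq : Function.Surjective q)
    (u : ℕ → M) :
    ∑ P ∈ setPartitions (univ : Finset α),
        (if ∀ B ∈ P, ∀ x y, q x = q y → x ∈ B → y ∈ B then u P.card else 0) =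
      ∑ Q ∈ setPartitions (univ : Finset β), u Q.card := by
  rw [← sum_filter]
  refine sum_nbij' (fun P => P.image (image q)) (fun Q => Q.image fun D => univ.filter (q · ∈ D))
    ?_ ?_ ?_ ?_ ?_
  · intro P hP
    rw [mem_filter] at hP
    exact image_image_mem_setPartitions hq hP.1 hP.2
  · intro Q hQ
    refine mem_filter.2 ⟨image_filter_mem_setPartitions hq hQ, ?_⟩
    simp only [mem_image]
    rintro _ ⟨D, -, rfl⟩ x y hxy
    simp [hxy]
  · intro P hP
    rw [mem_filter] at hP
    rw [image_image]
    exact (image_congr fun B hB => filter_mem_image_eq_of_saturated (hP.2 B hB)).trans image_id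
  · intro Q _
    rw [image_image]
    exact (image_congr fun D _ => image_filter_mem_eq hq D).trans image_id
  · intro P hP
    rw [mem_filter] at hP
    rw [card_image_of_injOn fun B hB B' hB' h => ?_]
    rw [← filter_mem_image_eq_of_saturated (hP.2 B hB),
      ← filter_mem_image_eq_of_saturated (hP.2 B' hB'), h]

end Coarsening

section Graphs

variable {V : Type*}

theorem SimpleGraph.preconnected_iff_subsingleton_connectedComponent {G : SimpleGraph V} :
    G.Preconnected ↔ Subsingleton G.ConnectedComponent :=
  ⟨Preconnected.subsingleton_connectedComponent,
    fun _ _ _ => ConnectedComponent.exact (Subsingleton.elim _ _)⟩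

theorem SimpleGraph.le_fromRel_iff {r : V → V → Prop} (hr : ∀ ⦃i j⦄, r i j → r j i)
    {G : SimpleGraph V} :
    G ≤ fromRel r ↔ ∀ i j, G.Adj i j → r i j :=
  ⟨fun h i j hij => ((fromRel_adj r i j).1 (h hij)).2.elim id (hr ·),
    fun h _ _ hij => (fromRel_adj r _ _).2 ⟨G.ne_of_adj hij, Or.inl (h _ _ hij)⟩⟩

theorem SimpleGraph.sum_le_neg_one_pow_ncard_edgeSet [Fintype V] [DecidableEq V]
    (H : SimpleGraph V) :
    ∑ G : SimpleGraph V, (if G ≤ H then (-1 : ℝ) ^ G.edgeSet.ncard else 0) =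
      if H = ⊥ then 1 else 0 := by
  rw [← sum_filter]
  calc ∑ G ∈ univ.filter (· ≤ H), (-1 : ℝ) ^ G.edgeSet.ncard
      = ∑ F ∈ H.edgeFinset.powerset, (-1 : ℝ) ^ F.card := by
        refine sum_nbij' (fun G => G.edgeFinset) (fun F => fromEdgeSet F) ?_ ?_ ?_ ?_ ?_
        · simp [edgeFinset_subset_edgeFinset]
        · simp only [mem_powerset, mem_filter, mem_univ, true_and, fromEdgeSet_le]
          exact fun F hF => Set.sdiff_subset.trans (coe_edgeFinset H ▸ coe_subset.2 hF)
        · simp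
        · intro F hF
          have hFH : (F : Set (Sym2 V)) ⊆ H.edgeSet :=
            coe_edgeFinset H ▸ coe_subset.2 (mem_powerset.1 hF)
          refine coe_injective ?_
          rw [coe_edgeFinset, edgeSet_fromEdgeSet, sdiff_eq_left,
            ← Set.subset_compl_iff_disjoint_right]
          exact hFH.trans (edgeSet_subset_compl_diagSet H)
        · intro G _
          simp [← Set.ncard_coe_finset]
    _ = if H = ⊥ then 1 else 0 := by
        rw [← edgeFinset_eq_empty]
        exact_mod_cast sum_powerset_neg_one_pow_card

def blockGraph (P : Finset (Finset V)) : SimpleGraph V :=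
  SimpleGraph.fromRel fun x y => ∃ B ∈ P, x ∈ B ∧ y ∈ B

theorem mem_of_reachable_of_le_blockGraph [Fintype V] [DecidableEq V] {G : SimpleGraph V}
    {P : Finset (Finset V)} (hP : P ∈ setPartitions univ) (hG : G ≤ blockGraph P) {B : Finset V}
    (hB : B ∈ P) {x y : V} (hxy : G.Reachable x y) (hx : x ∈ B) : y ∈ B := by
  obtain ⟨w⟩ := hxy
  induction w with
  | nil => exact hx
  | cons hadj _ ih =>
    refine ih ?_
    obtain ⟨-, ⟨C, hC, hxC, hyC⟩ | ⟨C, hC, hyC, hxC⟩⟩ := (SimpleGraph.fromRel_adj _ _ _).1 (hG hadj)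
    all_goals rwa [← eq_of_mem_of_mem_setPartitions hP hC hB hxC hx]

theorem le_blockGraph_iff [Fintype V] [DecidableEq V] {G : SimpleGraph V}
    {P : Finset (Finset V)} (hP : P ∈ setPartitions univ) :
    G ≤ blockGraph P ↔ ∀ B ∈ P, ∀ x y,
      G.connectedComponentMk x = G.connectedComponentMk y → x ∈ B → y ∈ B := by
  refine ⟨fun hG B hB x y hxy => mem_of_reachable_of_le_blockGraph hP hG hB
    (SimpleGraph.ConnectedComponent.exact hxy), fun hsat x y hxy => ?_⟩
  obtain ⟨B, hB, hxB⟩ := exists_mem_of_mem_setPartitions hP (mem_univ x)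
  exact (SimpleGraph.fromRel_adj _ _ _).2 ⟨G.ne_of_adj hxy, Or.inl ⟨B, hB, hxB,
    hsat B hB x y (SimpleGraph.ConnectedComponent.sound hxy.reachable) hxB⟩⟩

/-- `G ≤ blockGraph P` says that `P` is coarser than the partition of `V` into the connected
components of `G`, so these `P` are the partitions of `G.ConnectedComponent`. -/
theorem sum_setPartitions_partitionMoebius_of_le_blockGraph [Fintype V] [DecidableEq V]
    (G : SimpleGraph V) :
    ∑ P ∈ setPartitions (univ : Finset V),
        (if G ≤ blockGraph P then partitionMoebius P.card else 0) =
      if G.Preconnected then 1 else 0 := by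
  have := Fintype.ofFinite G.ConnectedComponent
  rw [sum_congr rfl fun P hP => if_congr (le_blockGraph_iff hP) rfl rfl,
    sum_setPartitions_saturated (fun c => c.exists_rep), sum_setPartitions_partitionMoebius,
    card_univ]
  exact if_congr (Fintype.card_le_one_iff_subsingleton.trans
    SimpleGraph.preconnected_iff_subsingleton_connectedComponent.symm) rfl rfl

end Graphs

theorem prod_disconnectionIndicator {n : ℕ} (r : Fin n → Fin n → Prop)
    (P : Finset (Finset (Fin n))) :
    ∏ B ∈ P, disconnectionIndicator r B =
      if SimpleGraph.fromRel r ⊓ blockGraph P = ⊥ then 1 else 0 := by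
  have hbot : SimpleGraph.fromRel r ⊓ blockGraph P = ⊥ ↔
      ∀ B ∈ P, ∀ i ∈ B, ∀ j ∈ B, i ≠ j → ¬r i j := by
    simp only [SimpleGraph.eq_bot_iff_forall_not_adj, SimpleGraph.inf_adj, blockGraph,
      SimpleGraph.fromRel_adj]
    grind
  simp only [disconnectionIndicator, prod_boole, hbot]
  congr

theorem cumulant_of_disconnection_eq_sum_connected_graphs
    (n : ℕ) (hn : 1 ≤ n) (r : Fin n → Fin n → Prop) (hr : Symmetric r) :
    cumulantFamily (disconnectionIndicator r) (Finset.univ : Finset (Fin n)) =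
      ∑ G : SimpleGraph (Fin n),
        if G.Connected ∧ (∀ i j : Fin n, G.Adj i j → r i j) then
          (-1 : ℝ) ^ G.edgeSet.ncard else 0 := by
  have hne : Nonempty (Fin n) := ⟨⟨0, hn⟩⟩
  calc cumulantFamily (disconnectionIndicator r) univ
      = ∑ P ∈ setPartitions univ, ∑ G : SimpleGraph (Fin n), partitionMoebius P.card *
          if G ≤ SimpleGraph.fromRel r ⊓ blockGraph P then (-1 : ℝ) ^ G.edgeSet.ncard else 0 := by
        simp_rw [← mul_sum, SimpleGraph.sum_le_neg_one_pow_ncard_edgeSet,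
          ← prod_disconnectionIndicator]
        rfl
    _ = ∑ G : SimpleGraph (Fin n), if G ≤ SimpleGraph.fromRel r then (-1 : ℝ) ^ G.edgeSet.ncard *
          ∑ P ∈ setPartitions univ, (if G ≤ blockGraph P then partitionMoebius P.card else 0)
          else 0 := by
        rw [sum_comm]
        refine sum_congr rfl fun G _ => ?_
        by_cases hG : G ≤ SimpleGraph.fromRel r
        · simp only [le_inf_iff, hG, true_and, mul_comm, sum_mul, ite_mul, zero_mul, mul_ite,
            mul_zero, if_true]
        · simp [le_inf_iff, hG]
    _ = _ := by
        simp_rw [sum_setPartitions_partitionMoebius_of_le_blockGraph,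
          SimpleGraph.le_fromRel_iff hr, SimpleGraph.connected_iff]
        simp only [hne, true_and, mul_ite, mul_one, mul_zero, ← ite_and, and_comm]
end

section
/- Let n ≥ 1, let ∼ be a symmetric relation on {1,…,n}, let Φ be the associated disconnection indicator on nonempty subsets of {1,…,n}, and let φ be the cumulant family of Φ. Then the tree inequality |φ({1,…,n})| ≤ ∑_T ∏_{{i,j} ∈ E(T)} 1_{i∼j} holds, where the sum ranges over all trees T on the vertex set {1,…,n}; i.e. |φ({1,…,n})| is at most the number of trees on {1,…,n} all of whose edges {i,j} satisfy i ∼ j. -/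
/-!
Statement 2 (tree inequality): let `∼` be a symmetric relation on `{1,…,n}` (`n ≥ 1`), `Φ` the
associated disconnection indicator on nonempty subsets, and `φ` its cumulant family.  Then
`|φ({1,…,n})|` is at most the number of trees on `{1,…,n}` all of whose edges `{i,j}`
satisfy `i ∼ j`.
-/

open Finset

open scoped Classical

/-!
A set partition contributes to the cumulant of the disconnection indicator exactly when each of
its blocks is independent in the graph `E` of `∼`, so the cumulant is `φ(E) = ∑ μ(#π)` over such
partitions `π`, with `μ(k) = (-1)^(k-1) (k-1)!`. It obeys deletion–contraction,
`φ(E) = φ(E - e) - φ(E / e)`: the partitions independent in `E - e` with a block containing both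
ends of `e` are, after dropping one end, the partitions independent in `E / e`. The number of
spanning trees is superadditive under the same operations (trees avoiding `e`, and trees of
`E / e` lifted through `e`). For edgeless graphs `φ` is `1` on one vertex and `0` on more, since
`μ(k + 1) + k μ(k) = 0`, so induction on the number of edges bounds `|φ(E)|` by the number of
spanning trees.
-/

theorem SimpleGraph.reachable_fromEdgeSet_of_mem {β : Type*} {s : Set (Sym2 β)} {a b : β}
    (h : s(a, b) ∈ s) :
    (SimpleGraph.fromEdgeSet s).Reachable a b := by
  by_cases hab : a = b
  · exact hab ▸ SimpleGraph.Reachable.refl a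
  · exact ((SimpleGraph.fromEdgeSet_adj _).2 ⟨h, hab⟩).reachable

theorem SimpleGraph.Reachable.of_forall_adj {β : Type*} {G H : SimpleGraph β}
    (h : ∀ a b, G.Adj a b → H.Reachable a b) {a b : β} (hab : G.Reachable a b) :
    H.Reachable a b := by
  obtain ⟨w⟩ := hab
  induction w with
  | nil => rfl
  | cons hadj _ ih => exact (h _ _ hadj).trans ih


theorem SimpleGraph.le_fromRel_iff_s2 {β : Type*} {r : β → β → Prop} (hr : Symmetric r)
    (T : SimpleGraph β) : T ≤ SimpleGraph.fromRel r ↔ ∀ i j, T.Adj i j → r i j := by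
  refine ⟨fun h i j hij => ?_, fun h i j hij => ?_⟩
  · exact ((SimpleGraph.fromRel_adj r i j).1 (h hij)).2.elim id fun hji => hr hji
  · exact (SimpleGraph.fromRel_adj r i j).2 ⟨T.ne_of_adj hij, Or.inl (h i j hij)⟩

namespace TreeInequality

variable {α : Type*}

theorem map_mem_sym2_iff {β : Type*} {f : α → β} {B : Finset α} {B' : Finset β}
    (h : ∀ x, f x ∈ B' ↔ x ∈ B) (d : Sym2 α) : d.map f ∈ B'.sym2 ↔ d ∈ B.sym2 := by
  simp [mem_sym2_iff, Sym2.mem_map, h]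

theorem disjoint_image_map_sym2_iff {β : Type*} [DecidableEq β] {f : α → β} {B : Finset α}
    {B' : Finset β} (h : ∀ x, f x ∈ B' ↔ x ∈ B) (D : Finset (Sym2 α)) :
    Disjoint (D.image (Sym2.map f)) B'.sym2 ↔ Disjoint D B.sym2 := by
  simp only [disjoint_left, mem_image, forall_exists_index, and_imp, forall_apply_eq_imp_iff₂,
    map_mem_sym2_iff h]

section SetPartitions

variable [DecidableEq α] {S W : Finset α} {π : Finset (Finset α)} {B C : Finset α} {x : α}

theorem mem_setPartitions :
    π ∈ setPartitions S ↔
      (∀ B ∈ π, B.Nonempty) ∧ (∀ B ∈ π, ∀ B' ∈ π, B ≠ B' → Disjoint B B') ∧ π.sup id = S := by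
  unfold setPartitions
  refine ⟨fun h => (mem_filter.1 h).2, fun h => mem_filter.2 ⟨?_, h⟩⟩
  exact mem_powerset.2 fun B hB => mem_powerset.2 (h.2.2 ▸ le_sup (f := id) hB)

theorem subset_of_mem_setPartitions (hπ : π ∈ setPartitions S) (hB : B ∈ π) : B ⊆ S :=
  (mem_setPartitions.1 hπ).2.2 ▸ le_sup (f := id) hB

theorem ne_empty_of_mem_setPartitions (hπ : π ∈ setPartitions S) (hB : B ∈ π) : B ≠ ∅ :=
  nonempty_iff_ne_empty.1 ((mem_setPartitions.1 hπ).1 B hB)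

theorem empty_notMem_of_mem_setPartitions (hπ : π ∈ setPartitions S) : ∅ ∉ π :=
  fun h => Finset.not_nonempty_empty ((mem_setPartitions.1 hπ).1 ∅ h)

theorem exists_mem_of_mem_setPartitions (hπ : π ∈ setPartitions S) (hx : x ∈ S) :
    ∃ B ∈ π, x ∈ B := by
  rw [← (mem_setPartitions.1 hπ).2.2] at hx
  simpa using Finset.mem_sup.1 hx

theorem eq_of_mem_of_mem_setPartitions (hπ : π ∈ setPartitions S) {B' : Finset α} (hB : B ∈ π)
    (hB' : B' ∈ π) (hx : x ∈ B) (hx' : x ∈ B') : B = B' := by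
  by_contra hne
  exact Finset.disjoint_left.1 ((mem_setPartitions.1 hπ).2.1 B hB B' hB' hne) hx hx'

theorem empty_mem_setPartitions_iff : ∅ ∈ setPartitions S ↔ S = ∅ := by
  simp [mem_setPartitions, eq_comm]

theorem insert_mem_setPartitions (hπ : π ∈ setPartitions S) (hB : B.Nonempty)
    (hBS : Disjoint B S) : insert B π ∈ setPartitions (B ∪ S) := by
  obtain ⟨hne, hdisj, hsup⟩ := mem_setPartitions.1 hπ
  have hBπ (D : Finset α) (hD : D ∈ π) : Disjoint B D :=
    hBS.mono_right (subset_of_mem_setPartitions hπ hD)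
  refine mem_setPartitions.2 ⟨?_, ?_, by rw [sup_insert, hsup]; rfl⟩
  · simpa [hB] using hne
  · simp only [mem_insert]
    rintro D (rfl | hD) D' (rfl | hD') hDD'
    exacts [absurd rfl hDD', hBπ D' hD', (hBπ D hD).symm, hdisj D hD D' hD' hDD']

theorem erase_mem_setPartitions (hπ : π ∈ setPartitions S) (hB : B ∈ π) :
    π.erase B ∈ setPartitions (S \ B) := by
  obtain ⟨hne, hdisj, hsup⟩ := mem_setPartitions.1 hπ
  refine mem_setPartitions.2 ⟨fun D hD => hne D (mem_of_mem_erase hD),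
    fun D hD D' hD' => hdisj D (mem_of_mem_erase hD) D' (mem_of_mem_erase hD'), ?_⟩
  have hdisjB : Disjoint B ((π.erase B).sup id) :=
    Finset.disjoint_sup_right.2 fun D hD =>
      hdisj B hB D (mem_of_mem_erase hD) (ne_of_mem_erase hD).symm
  rw [← hsup, ← insert_erase hB, sup_insert, erase_insert (notMem_erase B π)]
  exact (union_sdiff_cancel_left hdisjB).symm

/-- `C = ∅` stands for a new singleton block `{x}`. -/
def insertIntoBlock (x : α) (π : Finset (Finset α)) (C : Finset α) : Finset (Finset α) :=
  insert (insert x C) (π.erase C)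

theorem erase_empty_insert_erase (hπ : π ∈ setPartitions S) (hC : C ∈ insert ∅ π) :
    (insert C (π.erase C)).erase ∅ = π := by
  rcases mem_insert.1 hC with rfl | hC
  · rw [erase_insert (notMem_erase ∅ π),
      erase_eq_of_notMem (empty_notMem_of_mem_setPartitions hπ)]
  · rw [insert_erase hC, erase_eq_of_notMem (empty_notMem_of_mem_setPartitions hπ)]

variable (hx : x ∉ W)
include hx

theorem notMem_of_mem_insert_empty (hπ : π ∈ setPartitions W) (hC : C ∈ insert ∅ π) :
    x ∉ C := by
  rcases mem_insert.1 hC with rfl | hC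
  exacts [notMem_empty x, fun h => hx (subset_of_mem_setPartitions hπ hC h)]

theorem insert_notMem_erase (hπ : π ∈ setPartitions W) : insert x C ∉ π.erase C :=
  fun h => hx (subset_of_mem_setPartitions hπ (mem_of_mem_erase h) (mem_insert_self x C))

theorem insertIntoBlock_mem_setPartitions (hπ : π ∈ setPartitions W) (hC : C ∈ insert ∅ π) :
    insertIntoBlock x π C ∈ setPartitions (insert x W) := by
  rcases mem_insert.1 hC with rfl | hC
  · rw [insertIntoBlock, erase_eq_of_notMem (empty_notMem_of_mem_setPartitions hπ)]
    simpa using insert_mem_setPartitions hπ (singleton_nonempty x) (disjoint_singleton_left.2 hx)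
  · have hCW := subset_of_mem_setPartitions hπ hC
    have := insert_mem_setPartitions (erase_mem_setPartitions hπ hC) (insert_nonempty x C)
      (by simpa [disjoint_insert_left, hx] using disjoint_sdiff)
    rwa [insert_union, union_sdiff_of_subset hCW] at this

theorem card_insertIntoBlock (hπ : π ∈ setPartitions W) (hC : C ∈ insert ∅ π) :
    #(insertIntoBlock x π C) = #π + if C = ∅ then 1 else 0 := by
  rw [insertIntoBlock, card_insert_of_notMem (insert_notMem_erase hx hπ)]
  rcases mem_insert.1 hC with rfl | hC
  · rw [erase_eq_of_notMem (empty_notMem_of_mem_setPartitions hπ), if_pos rfl]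
  · have hCne : C ≠ ∅ := by rintro rfl; exact empty_notMem_of_mem_setPartitions hπ hC
    rw [card_erase_add_one hC, if_neg hCne, add_zero]

theorem exists_mem_insertIntoBlock_iff (hπ : π ∈ setPartitions W) {y : α} (hyx : y ≠ x) :
    (∃ B ∈ insertIntoBlock x π C, y ∈ B ∧ x ∈ B) ↔ y ∈ C := by
  refine ⟨?_, fun hy => ⟨_, mem_insert_self _ _, mem_insert_of_mem hy, mem_insert_self x C⟩⟩
  rintro ⟨B, hB, hyB, hxB⟩
  rcases mem_insert.1 hB with rfl | hB
  · exact (mem_insert.1 hyB).resolve_left hyx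
  · exact absurd (subset_of_mem_setPartitions hπ (mem_of_mem_erase hB) hxB) hx

theorem insertIntoBlock_inj {π₁ π₂ : Finset (Finset α)} {C₁ C₂ : Finset α}
    (hπ₁ : π₁ ∈ setPartitions W) (hC₁ : C₁ ∈ insert ∅ π₁)
    (hπ₂ : π₂ ∈ setPartitions W) (hC₂ : C₂ ∈ insert ∅ π₂)
    (h : insertIntoBlock x π₁ C₁ = insertIntoBlock x π₂ C₂) : π₁ = π₂ ∧ C₁ = C₂ := by
  have hx₂ : insert x C₂ ∈ insertIntoBlock x π₁ C₁ := h ▸ mem_insert_self _ _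
  have hins : insert x C₁ = insert x C₂ :=
    eq_of_mem_of_mem_setPartitions (insertIntoBlock_mem_setPartitions hx hπ₁ hC₁)
      (mem_insert_self _ _) hx₂ (mem_insert_self x C₁) (mem_insert_self x C₂)
  have hC : C₁ = C₂ := by
    rw [← erase_insert (notMem_of_mem_insert_empty hx hπ₁ hC₁), hins,
      erase_insert (notMem_of_mem_insert_empty hx hπ₂ hC₂)]
  subst hC
  have herase : π₁.erase C₁ = π₂.erase C₁ := by
    have := congrArg (·.erase (insert x C₁)) h
    simpa only [insertIntoBlock, erase_insert (insert_notMem_erase hx hπ₁),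
      erase_insert (insert_notMem_erase hx hπ₂)] using this
  refine ⟨?_, rfl⟩
  rw [← erase_empty_insert_erase hπ₁ hC₁, herase, erase_empty_insert_erase hπ₂ hC₂]

theorem exists_insertIntoBlock_eq (hπ : π ∈ setPartitions (insert x W)) :
    ∃ π' ∈ setPartitions W, ∃ C ∈ insert ∅ π', insertIntoBlock x π' C = π := by
  obtain ⟨B, hB, hxB⟩ := exists_mem_of_mem_setPartitions hπ (mem_insert_self x W)
  have hBsub := subset_of_mem_setPartitions hπ hB
  have hπB := erase_mem_setPartitions hπ hB
  by_cases hC : B.erase x = ∅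
  · have hBx : B = {x} := by rw [← insert_erase hxB, hC, insert_empty]
    subst hBx
    refine ⟨π.erase {x}, ?_, ∅, mem_insert_self _ _, ?_⟩
    · rwa [insert_sdiff_of_mem _ (mem_singleton_self x), sdiff_singleton_eq_erase,
        erase_eq_of_notMem hx] at hπB
    · rw [insertIntoBlock, insert_empty,
        erase_eq_of_notMem (empty_notMem_of_mem_setPartitions hπB), insert_erase hB]
  · have hCB : B.erase x ∉ π.erase B := by
      intro h
      obtain ⟨y, hy⟩ := nonempty_iff_ne_empty.2 hC
      exact ne_of_mem_erase h (eq_of_mem_of_mem_setPartitions hπ (mem_of_mem_erase h) hB hy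
        (mem_of_mem_erase hy))
    refine ⟨insert (B.erase x) (π.erase B), ?_, B.erase x,
      mem_insert_of_mem (mem_insert_self _ _), ?_⟩
    · have hW : B.erase x ∪ (insert x W \ B) = W := by
        ext y
        by_cases hyx : y = x
        · simp [hyx, hx, hxB]
        · have := @hBsub y
          simp only [mem_union, mem_erase, mem_sdiff, mem_insert, hyx, false_or, ne_eq,
            not_false_eq_true, true_and] at this ⊢
          tauto
      rw [← hW]
      exact insert_mem_setPartitions hπB (nonempty_iff_ne_empty.2 hC)
        (disjoint_sdiff.mono_left (erase_subset x B))
    · rw [insertIntoBlock, erase_insert hCB, insert_erase hxB, insert_erase hB]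

theorem sum_setPartitions_insert {M : Type*} [AddCommMonoid M] (g : Finset (Finset α) → M) :
    ∑ π ∈ setPartitions (insert x W), g π =
      ∑ π ∈ setPartitions W, ∑ C ∈ insert ∅ π, g (insertIntoBlock x π C) := by
  rw [sum_sigma']
  refine (sum_bij (fun p _ => insertIntoBlock x p.1 p.2) ?_ ?_ ?_ fun _ _ => rfl).symm
  · rintro ⟨π, C⟩ h
    exact insertIntoBlock_mem_setPartitions hx (mem_sigma.1 h).1 (mem_sigma.1 h).2
  · rintro ⟨π₁, C₁⟩ h₁ ⟨π₂, C₂⟩ h₂ h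
    rw [mem_sigma] at h₁ h₂
    obtain ⟨rfl, rfl⟩ := insertIntoBlock_inj hx h₁.1 h₁.2 h₂.1 h₂.2 h
    rfl
  · intro π hπ
    obtain ⟨π', hπ', C, hC, rfl⟩ := exists_insertIntoBlock_eq hx hπ
    exact ⟨⟨π', C⟩, mem_sigma.2 ⟨hπ', hC⟩, rfl⟩

end SetPartitions

section Cumulant

variable [DecidableEq α] {V W : Finset α} {E D : Finset (Sym2 α)} {u v x : α}

noncomputable def cumulantCoeff (k : ℕ) : ℝ := (-1 : ℝ) ^ (k - 1) * (Nat.factorial (k - 1) : ℝ)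

theorem cumulantCoeff_succ_add_mul (k : ℕ) :
    cumulantCoeff (k + 1) + k * cumulantCoeff k = if k = 0 then 1 else 0 := by
  rcases k with _ | k
  · simp [cumulantCoeff]
  · simp only [cumulantCoeff, Nat.add_sub_cancel, Nat.factorial_succ, pow_succ]
    push_cast
    ring_nf

theorem sum_cumulantCoeff_setPartitions_insert (hx : x ∉ W) :
    ∑ π ∈ setPartitions (insert x W), cumulantCoeff #π = if W = ∅ then 1 else 0 := by
  have hinner (π) (hπ : π ∈ setPartitions W) :
      ∑ C ∈ insert ∅ π, cumulantCoeff #(insertIntoBlock x π C) = if π = ∅ then 1 else 0 := by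
    have hblock (C) (hC : C ∈ π) : cumulantCoeff #(insertIntoBlock x π C) = cumulantCoeff #π := by
      rw [card_insertIntoBlock hx hπ (mem_insert_of_mem hC),
        if_neg (ne_empty_of_mem_setPartitions hπ hC), add_zero]
    rw [sum_insert (empty_notMem_of_mem_setPartitions hπ),
      card_insertIntoBlock hx hπ (mem_insert_self _ _), if_pos rfl, sum_congr rfl hblock,
      sum_const, nsmul_eq_mul, cumulantCoeff_succ_add_mul]
    simp only [card_eq_zero]
  rw [sum_setPartitions_insert hx, sum_congr rfl hinner, sum_ite_eq']
  simp only [empty_mem_setPartitions_iff]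

/-- The Ursell function of the hard-core gas on the graph `E`. -/
noncomputable def graphCumulant (V : Finset α) (E : Finset (Sym2 α)) : ℝ :=
  ∑ π ∈ (setPartitions V).filter (fun π => ∀ B ∈ π, Disjoint E B.sym2), cumulantCoeff #π

theorem graphCumulant_empty (hx : x ∉ W) :
    graphCumulant (insert x W) ∅ = if W = ∅ then 1 else 0 := by
  rw [graphCumulant, filter_true_of_mem (fun _ _ (B : Finset α) _ => disjoint_empty_left B.sym2),
    sum_cumulantCoeff_setPartitions_insert hx]

theorem graphCumulant_eq_zero_of_loop (hu : u ∈ V) (he : s(u, u) ∈ E) :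
    graphCumulant V E = 0 := by
  rw [graphCumulant, filter_false_of_mem, sum_empty]
  intro π hπ h
  obtain ⟨B, hB, huB⟩ := exists_mem_of_mem_setPartitions hπ hu
  exact disjoint_left.1 (h B hB) he (mk_mem_sym2_iff.2 ⟨huB, huB⟩)

def contractEdge (E : Finset (Sym2 α)) (u v : α) : Finset (Sym2 α) :=
  (E.erase s(u, v)).image (Sym2.map (Function.update id v u))

theorem forall_disjoint_insertIntoBlock_iff {π : Finset (Finset α)} {C : Finset α} (hv : v ∉ W)
    (hπ : π ∈ setPartitions W) (hC : C ∈ π) (huC : u ∈ C) :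
    (∀ B ∈ insertIntoBlock v π C, Disjoint D B.sym2) ↔
      ∀ B ∈ π, Disjoint (D.image (Sym2.map (Function.update id v u))) B.sym2 := by
  conv_rhs => rw [← insert_erase hC]
  simp only [insertIntoBlock, forall_mem_insert]
  refine and_congr (disjoint_image_map_sym2_iff (fun y => ?_) D).symm
    (forall₂_congr fun B hB => (disjoint_image_map_sym2_iff (fun y => ?_) D).symm)
  · by_cases hy : y = v <;> simp [hy, huC]
  · have huB : u ∉ B := fun h => ne_of_mem_erase hB
      (eq_of_mem_of_mem_setPartitions hπ (mem_of_mem_erase hB) hC h huC)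
    have hvB : v ∉ B := fun h => hv (subset_of_mem_setPartitions hπ (mem_of_mem_erase hB) h)
    by_cases hy : y = v <;> simp [hy, huB, hvB]

theorem graphCumulant_contractEdge (hu : u ∈ V) (hv : v ∈ V) (huv : u ≠ v) :
    graphCumulant (V.erase v) (contractEdge E u v) =
      ∑ π ∈ (setPartitions V).filter (fun π => (∀ B ∈ π, Disjoint (E.erase s(u, v)) B.sym2) ∧
        ∃ B ∈ π, s(u, v) ∈ B.sym2), cumulantCoeff #π := by
  have hvW : v ∉ V.erase v := notMem_erase v V
  rw [sum_filter, ← insert_erase hv, sum_setPartitions_insert hvW, erase_insert hvW,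
    graphCumulant, sum_filter]
  refine sum_congr rfl fun π hπ => ?_
  obtain ⟨C₀, hC₀, huC₀⟩ := exists_mem_of_mem_setPartitions hπ (mem_erase.2 ⟨huv, hu⟩)
  simp only [mk_mem_sym2_iff, exists_mem_insertIntoBlock_iff hvW hπ huv]
  -- only inserting `v` into the block of `u` joins `u` and `v`
  rw [sum_eq_single_of_mem C₀ (mem_insert_of_mem hC₀)]
  · rw [card_insertIntoBlock hvW hπ (mem_insert_of_mem hC₀),
      if_neg (ne_empty_of_mem_setPartitions hπ hC₀), add_zero]
    simp only [forall_disjoint_insertIntoBlock_iff hvW hπ hC₀ huC₀, huC₀, and_true]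
    rfl
  · intro C hC hne
    refine if_neg fun ⟨_, huC⟩ => hne ?_
    have hCπ : C ∈ π := (mem_insert.1 hC).resolve_left (ne_empty_of_mem huC)
    exact eq_of_mem_of_mem_setPartitions hπ hCπ hC₀ huC huC₀

theorem graphCumulant_eq_sub (hu : u ∈ V) (hv : v ∈ V) (huv : u ≠ v) (he : s(u, v) ∈ E) :
    graphCumulant V E =
      graphCumulant V (E.erase s(u, v)) - graphCumulant (V.erase v) (contractEdge E u v) := by
  have hdisj (B : Finset α) :
      Disjoint E B.sym2 ↔ s(u, v) ∉ B.sym2 ∧ Disjoint (E.erase s(u, v)) B.sym2 := by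
    rw [← disjoint_insert_left, insert_erase he]
  rw [graphCumulant_contractEdge hu hv huv, eq_sub_iff_add_eq, graphCumulant, graphCumulant,
    ← sum_filter_add_sum_filter_not
      ((setPartitions V).filter fun π => ∀ B ∈ π, Disjoint (E.erase s(u, v)) B.sym2)
      (fun π => ∃ B ∈ π, s(u, v) ∈ B.sym2),
    filter_filter, filter_filter, add_comm]
  congr 2
  refine filter_congr fun π _ => ?_
  simp only [hdisj, forall_and, not_exists, not_and]
  tauto

end Cumulant

section SpanningTrees

variable {V : Finset α} {E : Finset (Sym2 α)} {u v : α}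

/-- Loops or edges leaving `V` would leave too few edges to connect `V`, so this is a spanning tree
of `V` in the usual sense. -/
def IsSpanningTree (V : Finset α) (T : Finset (Sym2 α)) : Prop :=
  (∀ a ∈ V, ∀ b ∈ V, (SimpleGraph.fromEdgeSet (T : Set (Sym2 α))).Reachable a b) ∧ #T + 1 = #V

noncomputable def spanningTreeCount (V : Finset α) (E : Finset (Sym2 α)) : ℕ :=
  #(E.powerset.filter (IsSpanningTree V))

theorem one_le_spanningTreeCount_singleton (x : α) (E : Finset (Sym2 α)) :
    1 ≤ spanningTreeCount {x} E := by
  refine card_pos.2 ⟨∅, mem_filter.2 ⟨empty_mem_powerset E, ?_, rfl⟩⟩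
  simp only [mem_singleton]
  rintro a rfl b rfl
  rfl

variable [DecidableEq α]

theorem isSpanningTree_insert_of_image_eq {T T' : Finset (Sym2 α)} (hu : u ∈ V) (hv : v ∈ V)
    (huv : u ≠ v) (hT : s(u, v) ∉ T) (hcard : #T = #T')
    (himage : T.image (Sym2.map (Function.update id v u)) = T')
    (hT' : IsSpanningTree (V.erase v) T') : IsSpanningTree V (insert s(u, v) T) := by
  set f := Function.update id v u
  set H := SimpleGraph.fromEdgeSet (↑(insert s(u, v) T) : Set (Sym2 α))
  have hlink (w : α) : H.Reachable w (f w) := by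
    by_cases hw : w = v
    · rw [hw, show f v = u from Function.update_self v u id]
      exact (SimpleGraph.reachable_fromEdgeSet_of_mem (mem_coe.2 (mem_insert_self _ _))).symm
    · simp [f, Function.update_of_ne hw]
  have hstep (a b : α) (hab : (SimpleGraph.fromEdgeSet (T' : Set (Sym2 α))).Adj a b) :
      H.Reachable a b := by
    obtain ⟨d, hd, hdab⟩ := mem_image.1 (himage ▸ (SimpleGraph.fromEdgeSet_adj _).1 hab).1
    induction d using Sym2.ind with
    | h p q =>
      have hpq : H.Reachable (f p) (f q) := ((hlink p).symm.trans
        (SimpleGraph.reachable_fromEdgeSet_of_mem (mem_coe.2 (mem_insert_of_mem hd)))).trans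
        (hlink q)
      rw [Sym2.map_mk] at hdab
      rcases Sym2.eq_iff.1 hdab with ⟨rfl, rfl⟩ | ⟨rfl, rfl⟩
      exacts [hpq, hpq.symm]
  have hfV (a : α) (ha : a ∈ V) : f a ∈ V.erase v := by
    by_cases hav : a = v
    · simpa [f, hav] using ⟨huv, hu⟩
    · simpa [f, Function.update_of_ne hav] using ⟨hav, ha⟩
  refine ⟨fun a ha b hb => ?_, ?_⟩
  · exact ((hlink a).trans ((hT'.1 _ (hfV a ha) _ (hfV b hb)).of_forall_adj hstep)).trans
      (hlink b).symm
  · have hcardT' := hT'.2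
    have hVpos : 0 < #V := card_pos.2 ⟨v, hv⟩
    rw [card_erase_of_mem hv] at hcardT'
    rw [card_insert_of_notMem hT, hcard]
    omega

theorem spanningTreeCount_erase_add_contractEdge_le (hu : u ∈ V) (hv : v ∈ V) (huv : u ≠ v)
    (he : s(u, v) ∈ E) :
    spanningTreeCount V (E.erase s(u, v)) + spanningTreeCount (V.erase v) (contractEdge E u v) ≤
      spanningTreeCount V E := by
  set f := Function.update id v u
  have : Nonempty (Sym2 α) := ⟨s(u, v)⟩
  -- a tree `T'` of the contraction lifts to `insert s(u, v) (T'.image g)`, `g` a section of it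
  choose! g hgE hgf using fun y (hy : y ∈ contractEdge E u v) => mem_image.1 hy
  have hlift {T' : Finset (Sym2 α)} (hT' : T' ⊆ contractEdge E u v) :
      T'.image g ⊆ E.erase s(u, v) ∧ #(T'.image g) = #T' ∧
        (T'.image g).image (Sym2.map f) = T' := by
    have hinv : Set.LeftInvOn (Sym2.map f) g T' := fun y hy => hgf y (hT' hy)
    refine ⟨fun d hd => ?_, card_image_of_injOn hinv.injOn, ?_⟩
    · obtain ⟨y, hy, rfl⟩ := mem_image.1 hd
      exact hgE y (hT' hy)
    · rw [image_image]
      exact (image_congr hinv).trans image_id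
  unfold spanningTreeCount
  conv_rhs => rw [← card_filter_add_card_filter_not (fun T => s(u, v) ∉ T)]
  refine add_le_add (card_le_card fun T hT => ?_) (card_le_card_of_injOn
    (fun T' : Finset (Sym2 α) => insert s(u, v) (T'.image g)) (fun T' hT' => ?_)
    fun T₁ hT₁ T₂ hT₂ h => ?_)
  · simp only [mem_filter, mem_powerset, subset_erase] at hT ⊢
    exact ⟨⟨hT.1.1, hT.2⟩, hT.1.2⟩
  · simp only [coe_filter, mem_powerset, Set.mem_ofPred_eq] at hT'
    obtain ⟨hsub, hcard, himage⟩ := hlift hT'.1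
    refine mem_filter.2 ⟨mem_filter.2 ⟨mem_powerset.2 (insert_subset he
      (hsub.trans (erase_subset _ _))), ?_⟩, not_not.2 (mem_insert_self _ _)⟩
    exact isSpanningTree_insert_of_image_eq hu hv huv (fun h => notMem_erase _ _ (hsub h)) hcard
      himage hT'.2
  · have hrecover {T' : Finset (Sym2 α)} (hT' : T' ⊆ contractEdge E u v) :
        ((insert s(u, v) (T'.image g)).erase s(u, v)).image (Sym2.map f) = T' := by
      obtain ⟨hsub, -, himage⟩ := hlift hT'
      rw [erase_insert fun h => notMem_erase _ _ (hsub h), himage]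
    simp only [coe_filter, mem_powerset, Set.mem_ofPred_eq] at hT₁ hT₂
    rw [← hrecover hT₁.1, ← hrecover hT₂.1]
    exact congrArg (fun T => (T.erase s(u, v)).image (Sym2.map f)) h

end SpanningTrees

section TreeBound

variable [DecidableEq α] {V : Finset α} {E : Finset (Sym2 α)} {u v : α}

theorem contractEdge_subset_sym2 (hu : u ∈ V) (huv : u ≠ v) (hE : E ⊆ V.sym2) :
    contractEdge E u v ⊆ (V.erase v).sym2 := by
  intro d hd
  obtain ⟨d₀, hd₀, rfl⟩ := mem_image.1 hd
  refine mem_sym2_iff.2 fun y hy => ?_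
  obtain ⟨x, hx, rfl⟩ := Sym2.mem_map.1 hy
  have hxV := mem_sym2_iff.1 (hE (mem_of_mem_erase hd₀)) x hx
  by_cases hxv : x = v
  · simpa [hxv] using ⟨huv, hu⟩
  · simpa [Function.update_of_ne hxv] using ⟨hxv, hxV⟩

theorem abs_graphCumulant_le_spanningTreeCount (hV : V.Nonempty) (hE : E ⊆ V.sym2) :
    |graphCumulant V E| ≤ spanningTreeCount V E := by
  induction hk : #E using Nat.strong_induction_on generalizing V E with
  | _ k ih =>
  subst hk
  obtain rfl | ⟨e, he⟩ := E.eq_empty_or_nonempty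
  · obtain ⟨x, hx⟩ := hV
    rw [← insert_erase hx, graphCumulant_empty (notMem_erase x V)]
    split_ifs with hW
    · rw [hW, insert_empty, abs_one]
      exact_mod_cast one_le_spanningTreeCount_singleton x ∅
    · simp
  induction e using Sym2.ind with
  | h u v =>
  obtain ⟨hu, hv⟩ := mk_mem_sym2_iff.1 (hE he)
  by_cases huv : u = v
  · subst huv
    rw [graphCumulant_eq_zero_of_loop hu he, abs_zero]
    positivity
  have hcard : #(E.erase s(u, v)) < #E := card_erase_lt_of_mem he
  have hdel := ih _ hcard hV ((erase_subset _ _).trans hE) rfl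
  have hcon := ih _ (card_image_le.trans_lt hcard) ⟨u, mem_erase.2 ⟨huv, hu⟩⟩
    (contractEdge_subset_sym2 hu huv hE) rfl
  rw [graphCumulant_eq_sub hu hv huv he]
  calc _ ≤ |graphCumulant V (E.erase s(u, v))| +
          |graphCumulant (V.erase v) (contractEdge E u v)| := abs_sub _ _
    _ ≤ spanningTreeCount V (E.erase s(u, v)) +
          spanningTreeCount (V.erase v) (contractEdge E u v) := add_le_add hdel hcon
    _ ≤ spanningTreeCount V E := by
        exact_mod_cast spanningTreeCount_erase_add_contractEdge_le hu hv huv he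

end TreeBound

section DisconnectionIndicator

theorem disconnectionIndicator_eq {n : ℕ} (r : Fin n → Fin n → Prop) (B : Finset (Fin n)) :
    disconnectionIndicator r B =
      if Disjoint (SimpleGraph.fromRel r).edgeFinset B.sym2 then 1 else 0 := by
  unfold disconnectionIndicator
  congr 1
  simp only [disjoint_left, Sym2.forall, SimpleGraph.mem_edgeFinset, SimpleGraph.mem_edgeSet,
    SimpleGraph.fromRel_adj, mk_mem_sym2_iff]
  grind

theorem cumulantFamily_disconnectionIndicator {n : ℕ} (r : Fin n → Fin n → Prop)
    (S : Finset (Fin n)) :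
    cumulantFamily (disconnectionIndicator r) S =
      graphCumulant S (SimpleGraph.fromRel r).edgeFinset := by
  simp only [cumulantFamily, disconnectionIndicator_eq, prod_boole, mul_ite, mul_one, mul_zero,
    graphCumulant, sum_filter]
  exact sum_congr rfl fun _ _ => by split_ifs <;> rfl

theorem spanningTreeCount_le_card_isTree {β : Type*} [Fintype β]
    (G : SimpleGraph β) [Fintype G.edgeSet] :
    spanningTreeCount univ G.edgeFinset ≤ Nat.card {T : SimpleGraph β // T.IsTree ∧ T ≤ G} := by
  have hedges {T : Finset (Sym2 β)} (hT : T ⊆ G.edgeFinset) :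
      (SimpleGraph.fromEdgeSet (T : Set (Sym2 β))).edgeSet = T := by
    rw [SimpleGraph.edgeSet_fromEdgeSet, sdiff_eq_left, Set.disjoint_left]
    exact fun e he hd => G.not_isDiag_of_mem_edgeSet (G.mem_edgeFinset.1 (hT he)) hd
  rw [spanningTreeCount, ← Nat.card_eq_finsetCard]
  refine Nat.card_le_card_of_injective (fun T => ⟨SimpleGraph.fromEdgeSet T.1, ?_⟩) ?_
  · obtain ⟨hTG, hreach, hcard⟩ := mem_filter.1 T.2
    have hne : Nonempty β := by
      rw [← Finset.univ_nonempty_iff, ← card_pos]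
      omega
    refine ⟨(SimpleGraph.isTree_iff_connected_and_card).2 ⟨(SimpleGraph.connected_iff _).2
      ⟨fun a b => hreach a (mem_univ a) b (mem_univ b), hne⟩, ?_⟩, ?_⟩
    · rw [hedges (mem_powerset.1 hTG), Nat.card_coe_set_eq, Set.ncard_coe_finset, hcard,
        Nat.card_eq_fintype_card, card_univ]
    · rw [SimpleGraph.fromEdgeSet_le]
      exact fun e he => G.mem_edgeFinset.1 (mem_powerset.1 hTG he.1)
  · rintro ⟨T₁, h₁⟩ ⟨T₂, h₂⟩ h
    have := congrArg (fun T => (T.1 : SimpleGraph β).edgeSet) h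
    simp only [hedges (mem_powerset.1 (mem_filter.1 h₁).1),
      hedges (mem_powerset.1 (mem_filter.1 h₂).1), coe_inj] at this
    exact Subtype.ext this

end DisconnectionIndicator

end TreeInequality

open TreeInequality

theorem tree_inequality (n : ℕ) (hn : 1 ≤ n) (r : Fin n → Fin n → Prop) (hr : Symmetric r) :
    |cumulantFamily (disconnectionIndicator r) (Finset.univ : Finset (Fin n))| ≤
      (Nat.card {T : SimpleGraph (Fin n) // T.IsTree ∧ ∀ i j : Fin n, T.Adj i j → r i j} : ℝ) := by
  calc |cumulantFamily (disconnectionIndicator r) univ|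
      = |graphCumulant univ (SimpleGraph.fromRel r).edgeFinset| := by
        rw [cumulantFamily_disconnectionIndicator]
    _ ≤ spanningTreeCount univ (SimpleGraph.fromRel r).edgeFinset :=
      abs_graphCumulant_le_spanningTreeCount ⟨⟨0, hn⟩, mem_univ _⟩ (by simp [sym2_univ])
    _ ≤ Nat.card {T : SimpleGraph (Fin n) // T.IsTree ∧ T ≤ SimpleGraph.fromRel r} := by
      exact_mod_cast spanningTreeCount_le_card_isTree _
    _ = _ := by simp_rw [SimpleGraph.le_fromRel_iff_s2 hr]
end
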